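/- Let κ be a measurable cardinal, let U be a normal measure on κ, and let B ⊆ U be a family of stationary sets with |B| ≤ κ. Then {b ∩ c : b ∈ B, c ∈ Cl} is not a base for U; consequently the normal measure* ultrafilter number u^nm*_κ is at least κ⁺. -/

import Mathlib

/-!
Every set `d` in a normal measure `U` contains a stationary set outside `U`. Let `W ⊆ d` be the
points of uncountable cofinality, still in `U`, and `S` the points `a ∈ W` at which `W` does not
reflect. `S` is stationary: for a club `C`, the least point of `W` that is a limit point of `C`
lies in `S ∩ C`. But `S ∉ U`: otherwise, choosing clubs below each `a ∈ S` that avoid `W`,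
pressing down and a diagonal intersection produce a point of `W` in one of these clubs.

Now let `(e i)_{i < κ}` be sets in `U` and `S i ⊆ e i ∩ (i, κ)` stationary with `S i ∉ U`. The
diagonal intersection of the complements of the `S i` is in `U`, but contains no `e i ∩ C` with
`C` club, since `S i` meets `C`. So no family of at most `κ` sets generates `U` together with
the club filter.
-/

open Set Cardinal

/-- `c` is a club in the well-ordered type `α` (thought of as the cardinal `κ = #α`):
it is closed (contains the supremum of each of its nonempty bounded subsets) and unbounded. -/
def IsClubIn {α : Type*} [LinearOrder α] (c : Set α) : Prop :=
  (∀ s ⊆ c, s.Nonempty → ∀ a : α, IsLUB s a → a ∈ c) ∧ ∀ a : α, ∃ b ∈ c, a < b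

/-- `x` is stationary: it meets every club. -/
def IsStatIn {α : Type*} [LinearOrder α] (x : Set α) : Prop :=
  ∀ c : Set α, IsClubIn c → (x ∩ c).Nonempty

/-- The club filter `Cl`: sets containing a club. -/
def ClubFilterSets (α : Type*) [LinearOrder α] : Set (Set α) :=
  {x : Set α | ∃ c : Set α, IsClubIn c ∧ c ⊆ x}

/-- `U` is a measure: a uniform, `<κ`-complete ultrafilter. -/
def IsMeasureOn {α : Type*} (U : Ultrafilter α) : Prop :=
  (∀ x ∈ U, #x = #α) ∧
    ∀ F : Set (Set α), #F < #α → (∀ x ∈ F, x ∈ U) → ⋂₀ F ∈ U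

/-- `U` is a normal measure: a measure closed under diagonal intersections. -/
def IsNormalMeasureOn {α : Type*} [LinearOrder α] (U : Ultrafilter α) : Prop :=
  IsMeasureOn U ∧ ∀ f : α → Set α, (∀ i, f i ∈ U) → {k : α | ∀ i < k, k ∈ f i} ∈ U

/-- `B` is a base for the ultrafilter `U`. -/
def IsBaseFor {α : Type*} (B : Set (Set α)) (U : Ultrafilter α) : Prop :=
  (∀ b ∈ B, b ∈ U) ∧ ∀ u ∈ U, ∃ b ∈ B, b ⊆ u

/-- `{b ∩ c : b ∈ B, c ∈ Cl}`. -/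
def InterClubBase {α : Type*} [LinearOrder α] (B : Set (Set α)) : Set (Set α) :=
  {y : Set α | ∃ b ∈ B, ∃ c ∈ ClubFilterSets α, y = b ∩ c}

/-- The normal measure* ultrafilter number `u^nm*_κ`. -/
noncomputable def uNmStar (α : Type*) [LinearOrder α] : Cardinal :=
  sInf { c : Cardinal | ∃ B : Set (Set α), (∀ b ∈ B, IsStatIn b) ∧
    (∃ U : Ultrafilter α, IsNormalMeasureOn U ∧ IsBaseFor (InterClubBase B) U) ∧ c = #B }

class IsUncountableCardinalOrder (α : Type*) [LinearOrder α] : Prop where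
  aleph0_lt : ℵ₀ < #α
  mk_Iio_lt (a : α) : #(Iio a) < #α

instance {α : Type*} [LinearOrder α] [IsUncountableCardinalOrder α] : NoMaxOrder α where
  exists_gt a := by
    by_contra! h
    have huniv : (univ : Set α) = Iio a ∪ {a} := by
      ext x; simpa using h x
    have hinf : ℵ₀ ≤ #α := IsUncountableCardinalOrder.aleph0_lt.le
    have hlt : #(Iio a) + #({a} : Set α) < #α :=
      add_lt_of_lt hinf (IsUncountableCardinalOrder.mk_Iio_lt a)
        (by simpa using one_lt_aleph0.trans_le hinf)
    exact (mk_univ (α := α) ▸ huniv ▸ (mk_union_le _ _).trans_lt hlt).false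

section Clubs

variable {α : Type*} [LinearOrder α]

theorem exists_isLUB_of_bddAbove [WellFoundedLT α] {s : Set α} (hs : BddAbove s) :
    ∃ z, IsLUB s z :=
  ⟨wellFounded_lt.min _ hs, wellFounded_lt.min_mem _ hs,
    fun _ hb => not_lt.1 (wellFounded_lt.not_lt_min _ hb)⟩

def limitPoints (c : Set α) : Set α :=
  {ξ | (c ∩ Iio ξ).Nonempty ∧ IsLUB (c ∩ Iio ξ) ξ}

theorem limitPoints_subset {c : Set α} (hc : IsClubIn c) : limitPoints c ⊆ c :=
  fun _ hξ => hc.1 _ inter_subset_left hξ.1 _ hξ.2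

theorem mem_limitPoints_of_forall_exists_between {c : Set α} {ξ w : α} (hw : w < ξ)
    (h : ∀ η < ξ, ∃ v ∈ c, η < v ∧ v < ξ) : ξ ∈ limitPoints c := by
  obtain ⟨v, hvc, -, hvξ⟩ := h w hw
  refine ⟨⟨v, hvc, hvξ⟩, fun u hu => hu.2.le, fun b hb => ?_⟩
  by_contra! hbξ
  obtain ⟨u, huc, hbu, huξ⟩ := h b hbξ
  exact (hb ⟨huc, huξ⟩).not_gt hbu

theorem mem_limitPoints_of_isLUB_range {c : Set α} {x : ℕ → α} (hx : StrictMono x)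
    (hxc : ∀ n, x n ∈ c) {z : α} (hz : IsLUB (range x) z) : z ∈ limitPoints c := by
  have hlt : ∀ n, x n < z := fun n => (hx n.lt_succ_self).trans_le (hz.1 (mem_range_self _))
  refine mem_limitPoints_of_forall_exists_between (hlt 0) fun η hη => ?_
  obtain ⟨_, ⟨n, rfl⟩, hηx, -⟩ := hz.exists_between hη
  exact ⟨x n, hxc n, hηx, hlt n⟩

theorem isLUB_mem_limitPoints {c s : Set α} (hs : s ⊆ limitPoints c) (hne : s.Nonempty) {z : α}
    (hz : IsLUB s z) : z ∈ limitPoints c := by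
  have hsub : ∀ y ∈ s, c ∩ Iio y ⊆ c ∩ Iio z := fun y hy =>
    inter_subset_inter_right _ (Iio_subset_Iio (hz.1 hy))
  obtain ⟨y, hy⟩ := hne
  exact ⟨(hs hy).1.mono (hsub y hy), fun v hv => hv.2.le,
    fun b hb => hz.2 fun y hy => (hs hy).2.2 fun v hv => hb (hsub y hy hv)⟩

theorem exists_lt_forall_le_of_notMem_limitPoints [WellFoundedLT α] {c : Set α} {k : α}
    (hne : (c ∩ Iio k).Nonempty) (hk : k ∉ limitPoints c) : ∃ g < k, ∀ x ∈ c, x < k → x ≤ g := by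
  obtain ⟨z, hz⟩ := exists_isLUB_of_bddAbove (s := c ∩ Iio k) ⟨k, fun _ hv => hv.2.le⟩
  exact ⟨z, (hz.2 fun _ hv => hv.2.le).lt_of_ne fun h => hk ⟨hne, h ▸ hz⟩,
    fun x hx hxk => hz.1 ⟨hx, hxk⟩⟩

def IsClubBelow (a : α) (c : Set α) : Prop :=
  c ⊆ Iio a ∧ (∀ w < a, ∃ v ∈ c, w < v) ∧ ∀ s ⊆ c, s.Nonempty → ∀ z, IsLUB s z → z < a → z ∈ c

def IsStatBelow (a : α) (x : Set α) : Prop :=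
  ∀ c, IsClubBelow a c → (x ∩ c).Nonempty

theorem IsClubBelow.mem_of_mem_limitPoints {a ξ : α} {c : Set α} (hc : IsClubBelow a c)
    (hξ : ξ ∈ limitPoints c) (hξa : ξ < a) : ξ ∈ c :=
  hc.2.2 _ inter_subset_left hξ.1 ξ hξ.2 hξa

def nonReflectingPoints (W : Set α) : Set α :=
  {a ∈ W | ¬IsStatBelow a (W ∩ Iio a)}

def HasCountableCof (a : α) : Prop :=
  ∃ x : ℕ → α, (∀ n, x n < a) ∧ IsLUB (range x) a

theorem isLUB_range_lt_of_not_hasCountableCof {a z : α} (ha : ¬HasCountableCof a) {x : ℕ → α}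
    (hxa : ∀ n, x n < a) (hz : IsLUB (range x) z) : z < a :=
  (hz.2 (forall_mem_range.2 fun n => (hxa n).le)).lt_of_ne fun h => ha ⟨x, hxa, h ▸ hz⟩

theorem exists_mem_limitPoints_between [WellFoundedLT α] {c : Set α} {a w : α}
    (hac : a ∈ limitPoints c) (ha : ¬HasCountableCof a) (hw : w < a) :
    ∃ z ∈ limitPoints c, w < z ∧ z < a := by
  have hcof : ∀ v < a, ∃ u ∈ c ∩ Iio a, v < u := fun v hv =>
    let ⟨u, hu, hvu, _⟩ := hac.2.exists_between hv
    ⟨u, hu, hvu⟩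
  obtain ⟨u₀, hu₀, hwu₀⟩ := hcof w hw
  have : NoMaxOrder ↥(c ∩ Iio a) :=
    ⟨fun v => let ⟨u, hu, hvu⟩ := hcof v v.2.2; ⟨⟨u, hu⟩, hvu⟩⟩
  obtain ⟨x, hx, hx0⟩ := Nat.exists_strictMono' (⟨u₀, hu₀⟩ : ↥(c ∩ Iio a))
  obtain ⟨z, hz⟩ := exists_isLUB_of_bddAbove (s := range fun n => (x n : α))
    ⟨a, forall_mem_range.2 fun n => (x n).2.2.le⟩
  refine ⟨z, mem_limitPoints_of_isLUB_range (Subtype.strictMono_coe _ |>.comp hx)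
    (fun n => (x n).2.1) hz, ?_, isLUB_range_lt_of_not_hasCountableCof ha (fun n => (x n).2.2) hz⟩
  exact hwu₀.trans_le (hz.1 ⟨0, by simp [hx0]⟩)

theorem isClubBelow_limitPoints_inter_Iio [WellFoundedLT α] {c : Set α} {a : α}
    (hac : a ∈ limitPoints c) (ha : ¬HasCountableCof a) :
    IsClubBelow a (limitPoints c ∩ Iio a) :=
  ⟨inter_subset_right,
    fun _ hw =>
      let ⟨z, hz, hwz, hza⟩ := exists_mem_limitPoints_between hac ha hw
      ⟨z, ⟨hz, hza⟩, hwz⟩,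
    fun _ hs hne _ hz hza => ⟨isLUB_mem_limitPoints (hs.trans inter_subset_left) hne hz, hza⟩⟩

theorem isClubIn_univ [NoMaxOrder α] : IsClubIn (univ : Set α) :=
  ⟨fun _ _ _ _ _ => mem_univ _, fun a => let ⟨b, hb⟩ := exists_gt a; ⟨b, mem_univ b, hb⟩⟩

theorem univ_mem_clubFilterSets [NoMaxOrder α] : (univ : Set α) ∈ ClubFilterSets α :=
  ⟨univ, isClubIn_univ, subset_rfl⟩

end Clubs

namespace IsNormalMeasureOn

variable {α : Type*} [LinearOrder α] {U : Ultrafilter α}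

theorem notMem_of_mk_lt (hU : IsNormalMeasureOn U) {x : Set α} (hx : #x < #α) : x ∉ U :=
  fun h => hx.ne (hU.1.1 x h)

theorem exists_fiber_mem_of_regressive (hU : IsNormalMeasureOn U) {X : Set α} (hX : X ∈ U)
    {f : α → α} (hf : ∀ k ∈ X, f k < k) : ∃ γ, {k ∈ X | f k = γ} ∈ U := by
  by_contra! h
  have hdiag := hU.2 (fun γ => {k ∈ X | f k = γ}ᶜ) fun γ => U.compl_mem_iff_notMem.2 (h γ)
  obtain ⟨k, hk, hkX⟩ := U.nonempty_of_mem (Filter.inter_mem hdiag hX)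
  exact hk (f k) (hf k hkX) ⟨hkX, rfl⟩

variable [IsUncountableCardinalOrder α]

theorem Ioi_mem (hU : IsNormalMeasureOn U) (a : α) : Ioi a ∈ U := by
  obtain ⟨b, hab⟩ := exists_gt a
  have hb : (Iio b)ᶜ ∈ U :=
    U.compl_mem_iff_notMem.2 (hU.notMem_of_mk_lt (IsUncountableCardinalOrder.mk_Iio_lt b))
  exact Filter.mem_of_superset hb fun x hx => hab.trans_le (not_lt.1 hx)

theorem countableInterFilter (hU : IsNormalMeasureOn U) :
    CountableInterFilter (U : Filter α) :=
  ⟨fun S hS => hU.1.2 S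
    ((mk_le_aleph0_iff.2 hS.to_subtype).trans_lt IsUncountableCardinalOrder.aleph0_lt)⟩

theorem setOf_not_hasCountableCof_mem (hU : IsNormalMeasureOn U) :
    {a : α | ¬HasCountableCof a} ∈ U := by
  refine U.compl_mem_iff_notMem.2 fun hX => ?_
  choose! x hxa hxlub using fun a (ha : a ∈ {a : α | HasCountableCof a}) => ha
  choose γ hγ using fun n => hU.exists_fiber_mem_of_regressive hX (f := fun a => x a n)
    fun a ha => hxa a ha n
  have := hU.countableInterFilter
  have hY : ⋂ n, {a ∈ {a : α | HasCountableCof a} | x a n = γ n} ∈ U :=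
    countable_iInter_mem.2 hγ
  have hlub : ∀ a ∈ ⋂ n, {a ∈ {a : α | HasCountableCof a} | x a n = γ n}, IsLUB (range γ) a :=
    fun a ha => by
      have ha' := mem_iInter.1 ha
      simpa [show x a = γ from funext fun n => (ha' n).2] using hxlub a (ha' 0).1
  obtain ⟨a₁, ha₁⟩ := U.nonempty_of_mem hY
  obtain ⟨a₂, ha₂, h₁₂⟩ := U.nonempty_of_mem (Filter.inter_mem hY (hU.Ioi_mem a₁))
  exact h₁₂.ne ((hlub a₁ ha₁).unique (hlub a₂ ha₂))

theorem nonReflectingPoints_notMem (hU : IsNormalMeasureOn U) {W : Set α} (hW : W ∈ U) :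
    nonReflectingPoints W ∉ U := by
  intro hW₁
  have hclub : ∀ a ∈ nonReflectingPoints W, ∃ c, IsClubBelow a c ∧ W ∩ Iio a ∩ c = ∅ :=
    fun a ha => by simpa [IsStatBelow, not_nonempty_iff_eq_empty] using ha.2
  choose! club hclub hdisj using hclub
  choose! next hnext_mem hnext_gt using
    fun a (ha : a ∈ nonReflectingPoints W) => (hclub a ha).2.1
  -- Pressing down `a ↦ next a η` shows that some bound `β η` fails on a measure-one set; then a
  -- point `x ∈ W` above all `β η` (`η < x`) is a limit point of `club a` for suitable `a > x`.
  by_cases h : ∃ η, ∀ β, {a ∈ nonReflectingPoints W | η < a ∧ β ≤ next a η} ∈ U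
  · obtain ⟨η, hη⟩ := h
    obtain ⟨γ, hγ⟩ := hU.exists_fiber_mem_of_regressive (Filter.inter_mem hW₁ (hU.Ioi_mem η))
      (f := fun a => next a η) fun a ha => (hclub a ha.1).1 (hnext_mem a ha.1 η ha.2)
    obtain ⟨β, hγβ⟩ := exists_gt γ
    obtain ⟨a, ⟨-, rfl⟩, -, -, hβ⟩ := U.nonempty_of_mem (Filter.inter_mem hγ (hη β))
    exact hβ.not_gt hγβ
  · push Not at h
    choose β hβ using h
    have hE := hU.2 (fun η => {a ∈ nonReflectingPoints W | η < a ∧ β η ≤ next a η}ᶜ)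
      fun η => U.compl_mem_iff_notMem.2 (hβ η)
    have hD := hU.2 (fun η => Ioi (β η)) fun η => hU.Ioi_mem (β η)
    obtain ⟨m, -⟩ := U.nonempty_of_mem Filter.univ_mem
    obtain ⟨x, ⟨hxW, hxD⟩, hmx⟩ :=
      U.nonempty_of_mem (Filter.inter_mem (Filter.inter_mem hW hD) (hU.Ioi_mem m))
    obtain ⟨a, ⟨ha, haE⟩, hxa⟩ :=
      U.nonempty_of_mem (Filter.inter_mem (Filter.inter_mem hW₁ hE) (hU.Ioi_mem x))
    have hxlim : x ∈ limitPoints (club a) := by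
      refine mem_limitPoints_of_forall_exists_between hmx fun η hηx => ?_
      have hηa := hηx.trans hxa
      have hnext : next a η < β η := not_le.1 fun h => haE η hηa ⟨ha, hηa, h⟩
      exact ⟨next a η, hnext_mem a ha η hηa, hnext_gt a ha η hηa, hnext.trans (hxD η hηx)⟩
    have hx : x ∈ W ∩ Iio a ∩ club a :=
      ⟨⟨hxW, hxa⟩, (hclub a ha).mem_of_mem_limitPoints hxlim hxa⟩
    rwa [hdisj a ha] at hx

variable [WellFoundedLT α]

theorem limitPoints_mem (hU : IsNormalMeasureOn U) {c : Set α}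
    (hc : ∀ a, ∃ b ∈ c, a < b) : limitPoints c ∈ U := by
  by_contra h
  obtain ⟨a₀, -⟩ := U.nonempty_of_mem Filter.univ_mem
  obtain ⟨m, hm, -⟩ := hc a₀
  have hX : (limitPoints c)ᶜ ∩ Ioi m ∈ U :=
    Filter.inter_mem (U.compl_mem_iff_notMem.2 h) (hU.Ioi_mem m)
  choose! g hgk hg using fun k (hk : k ∈ (limitPoints c)ᶜ ∩ Ioi m) =>
    exists_lt_forall_le_of_notMem_limitPoints ⟨m, hm, hk.2⟩ hk.1
  obtain ⟨γ, hγ⟩ := hU.exists_fiber_mem_of_regressive hX hgk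
  obtain ⟨x, hx, hγx⟩ := hc γ
  obtain ⟨k, ⟨hkX, rfl⟩, hxk⟩ := U.nonempty_of_mem (Filter.inter_mem hγ (hU.Ioi_mem x))
  exact (hg k hkX x hx hxk).not_gt hγx

theorem club_mem (hU : IsNormalMeasureOn U) {c : Set α} (hc : IsClubIn c) :
    c ∈ U :=
  Filter.mem_of_superset (hU.limitPoints_mem hc.2) (limitPoints_subset hc)

theorem mem_of_mem_clubFilterSets (hU : IsNormalMeasureOn U) {x : Set α}
    (hx : x ∈ ClubFilterSets α) : x ∈ U :=
  let ⟨_, hc, hcx⟩ := hx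
  Filter.mem_of_superset (hU.club_mem hc) hcx

theorem isStatIn_of_mem (hU : IsNormalMeasureOn U) {x : Set α} (hx : x ∈ U) :
    IsStatIn x :=
  fun _ hc => U.nonempty_of_mem (Filter.inter_mem hx (hU.club_mem hc))

theorem isStatIn_nonReflectingPoints (hU : IsNormalMeasureOn U) {W : Set α} (hW : W ∈ U)
    (hWcof : ∀ a ∈ W, ¬HasCountableCof a) : IsStatIn (nonReflectingPoints W) := by
  intro C hC
  have hne : (W ∩ limitPoints C).Nonempty :=
    U.nonempty_of_mem (Filter.inter_mem hW (hU.limitPoints_mem hC.2))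
  obtain ⟨haW, haC⟩ := wellFounded_lt.min_mem (W ∩ limitPoints C) hne
  refine ⟨_, ⟨haW, fun hstat => ?_⟩, limitPoints_subset hC haC⟩
  obtain ⟨v, ⟨hvW, hva⟩, hvC, -⟩ :=
    hstat _ (isClubBelow_limitPoints_inter_Iio haC (hWcof _ haW))
  exact wellFounded_lt.not_lt_min (W ∩ limitPoints C) ⟨hvW, hvC⟩ hva

theorem exists_isStatIn_subset_notMem (hU : IsNormalMeasureOn U) {d : Set α} (hd : d ∈ U) :
    ∃ S ⊆ d, IsStatIn S ∧ S ∉ U := by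
  have hW : d ∩ {a | ¬HasCountableCof a} ∈ U :=
    Filter.inter_mem hd hU.setOf_not_hasCountableCof_mem
  exact ⟨_, fun a ha => ha.1.1, hU.isStatIn_nonReflectingPoints hW fun a ha => ha.2,
    hU.nonReflectingPoints_notMem hW⟩

theorem exists_mem_forall_not_inter_subset (hU : IsNormalMeasureOn U) (e : α → Set α)
    (he : ∀ i, e i ∈ U) : ∃ u ∈ U, ∀ i c, IsClubIn c → ¬e i ∩ c ⊆ u := by
  choose S hSe hS hSU using fun i =>
    hU.exists_isStatIn_subset_notMem (Filter.inter_mem (he i) (hU.Ioi_mem i))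
  refine ⟨_, hU.2 (fun i => (S i)ᶜ) fun i => U.compl_mem_iff_notMem.2 (hSU i),
    fun i c hc hsub => ?_⟩
  obtain ⟨x, hxS, hxc⟩ := hS i c hc
  exact hsub ⟨(hSe i hxS).1, hxc⟩ i (hSe i hxS).2 hxS

theorem not_isBaseFor_interClubBase (hU : IsNormalMeasureOn U) {B : Set (Set α)}
    (hB : #B ≤ #α) : ¬IsBaseFor (InterClubBase B) U := by
  intro hbase
  have hBU : ∀ b ∈ B, b ∈ U := fun b hb => by
    simpa using hbase.1 _ ⟨b, hb, univ, univ_mem_clubFilterSets, rfl⟩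
  obtain ⟨-, ⟨b₀, hb₀, -⟩, -⟩ := hbase.2 univ Filter.univ_mem
  have : Nonempty B := ⟨⟨b₀, hb₀⟩⟩
  obtain ⟨f⟩ := hB
  set e : α → B := Function.invFun f
  obtain ⟨u, hu, hnot⟩ :=
    hU.exists_mem_forall_not_inter_subset (fun i => e i) fun i => hBU _ (e i).2
  obtain ⟨_, ⟨b, hb, c, ⟨c', hc', hc'c⟩, rfl⟩, hsub⟩ := hbase.2 u hu
  obtain ⟨i, hi⟩ := Function.invFun_surjective f.injective ⟨b, hb⟩
  refine hnot i c' hc' fun x hx => hsub ⟨?_, hc'c hx.2⟩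
  rw [← Subtype.coe_mk b hb, ← hi]
  exact hx.1

theorem isBaseFor_interClubBase_sets (hU : IsNormalMeasureOn U) :
    IsBaseFor (InterClubBase {x | x ∈ U}) U :=
  ⟨fun _ ⟨_, hb, _, hc, h⟩ => h ▸ Filter.inter_mem hb (hU.mem_of_mem_clubFilterSets hc),
    fun u hu => ⟨u ∩ univ, ⟨u, hu, univ, univ_mem_clubFilterSets, rfl⟩, inter_subset_left⟩⟩

end IsNormalMeasureOn

theorem uNmStar_ge_succ_general {α : Type*} [LinearOrder α] [WellFoundedLT α]
    (hunc : ℵ₀ < #α)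
    (hinit : ∀ a : α, #(Set.Iio a) < #α)
    (U : Ultrafilter α) (hU : IsNormalMeasureOn U)
    (B : Set (Set α))
    (hBcard : #B ≤ #α) :
    ¬ IsBaseFor (InterClubBase B) U ∧ Order.succ (#α) ≤ uNmStar α := by
  have : IsUncountableCardinalOrder α := ⟨hunc, hinit⟩
  refine ⟨hU.not_isBaseFor_interClubBase hBcard, le_csInf
    ⟨_, _, fun _ => hU.isStatIn_of_mem, ⟨U, hU, hU.isBaseFor_interClubBase_sets⟩, rfl⟩ ?_⟩
  rintro _ ⟨B', -, ⟨U', hU', hbase⟩, rfl⟩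
  exact Order.succ_le_of_lt (not_le.1 fun h => hU'.not_isBaseFor_interClubBase h hbase)

/-- Let `κ` be measurable, `U` a normal measure on `κ` and `B ⊆ U` a family of stationary
sets of size `≤ κ`. Then `{b ∩ c : b ∈ B, c ∈ Cl}` is not a base for `U`; consequently
`u^nm*_κ ≥ κ⁺`. Here `κ` is represented as a well-ordered type `α` of regular uncountable
cardinality all of whose proper initial segments are of size `< #α`. -/
theorem uNmStar_ge_succ {α : Type*} [LinearOrder α] [WellFoundedLT α]
    (hreg : (#α).IsRegular) (hunc : ℵ₀ < #α)
    (hinit : ∀ a : α, #(Set.Iio a) < #α)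
    (U : Ultrafilter α) (hU : IsNormalMeasureOn U)
    (B : Set (Set α)) (hBst : ∀ b ∈ B, IsStatIn b) (hBU : ∀ b ∈ B, b ∈ U)
    (hBcard : #B ≤ #α) :
    ¬ IsBaseFor (InterClubBase B) U ∧ Order.succ (#α) ≤ uNmStar α :=
  uNmStar_ge_succ_general hunc hinit U hU B hBcard
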